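/- Let Ĥ′ be the Q×Q matrix with zero diagonal, subdiagonal entries all equal to −2sin(πα), and superdiagonal entries −2sin(πα)·sin²(kπα)/sin²(πα) for k = 1,...,Q−1, where α = P/Q in lowest terms. Then det(Ĥ′ − E·I) = Σ_{i=0}^{⌊Q/2⌋} (−1)^{Q+i} 4^i E^{Q−2i} ẽ_i(sin²(πα), sin²(2πα), ..., sin²((Q−1)πα)). -/
import Mathlib


/-- The 2-step elementary symmetric polynomial `ẽ_k(x₁, …, x_n)`. -/
def etilde {R : Type*} [CommRing R] (n k : ℕ) (x : ℕ → R) : R :=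
  ∑ s ∈ ((Finset.Icc 1 n).powersetCard k).filter (fun s => ∀ i ∈ s, i + 1 ∉ s),
    ∏ j ∈ s, x j

/-- The `N × N` tridiagonal matrix with constant diagonal `x`, subdiagonal
entries `y₁, …, y_{N-1}` (entry `y k` at position `(k+1, k)`, 1-indexed) and
superdiagonal entries `b₁, …, b_{N-1}` (entry `b k` at position `(k, k+1)`). -/
def tridiag {R : Type*} [CommRing R] (N : ℕ) (x : R) (y b : ℕ → R) :
    Matrix (Fin N) (Fin N) R :=
  Matrix.of fun i j : Fin N =>
    if (i : ℕ) = (j : ℕ) then x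
    else if (j : ℕ) = (i : ℕ) + 1 then b ((i : ℕ) + 1)
    else if (i : ℕ) = (j : ℕ) + 1 then y ((j : ℕ) + 1)
    else 0


section HofstadterAux

variable {R : Type*} [CommRing R]

lemma etilde_zero (n : ℕ) (x : ℕ → R) : etilde n 0 x = 1 := by
  simp [etilde, Finset.powersetCard_zero, Finset.filter_singleton]

lemma etilde_eq_zero {n k : ℕ} (h : n + 1 < 2 * k) (x : ℕ → R) : etilde n k x = 0 := by
  unfold etilde
  rw [Finset.sum_eq_zero]
  intro s hs
  exfalso
  simp only [Finset.mem_filter, Finset.mem_powersetCard] at hs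
  obtain ⟨⟨hsub, hcard⟩, hadj⟩ := hs
  have hinj : Set.InjOn (fun i => (i + 1) / 2) s := by
    intro i hi j hj hij
    have hij' : (i + 1) / 2 = (j + 1) / 2 := hij
    by_contra hne
    rcases Nat.lt_or_ge i j with hlt | hge
    · have : j = i + 1 := by omega
      exact hadj i hi (this ▸ hj)
    · have hlt' : j < i := lt_of_le_of_ne hge (fun e => hne e.symm)
      have : i = j + 1 := by omega
      exact hadj j hj (this ▸ hi)
  have hmap : ∀ i ∈ s, (i + 1) / 2 ∈ Finset.Icc 1 ((n + 1) / 2) := by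
    intro i hi
    have := hsub hi
    simp only [Finset.mem_Icc] at this ⊢
    omega
  have := Finset.card_le_card_of_injOn _ hmap hinj
  simp only [Nat.card_Icc] at this
  omega

lemma etilde_succ (n k : ℕ) (x : ℕ → R) :
    etilde (n + 2) (k + 1) x = etilde (n + 1) (k + 1) x + x (n + 2) * etilde n k x := by
  classical
  unfold etilde
  rw [← Finset.sum_filter_add_sum_filter_not
      (((Finset.Icc 1 (n + 2)).powersetCard (k + 1)).filter (fun s => ∀ i ∈ s, i + 1 ∉ s))
      (fun s => (n + 2) ∉ s)]
  congr 1
  · apply Finset.sum_congr _ (fun _ _ => rfl)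
    ext s
    simp only [Finset.mem_filter, Finset.mem_powersetCard]
    constructor
    · rintro ⟨⟨⟨hsub, hcard⟩, hadj⟩, hnot⟩
      refine ⟨⟨fun a ha => ?_, hcard⟩, hadj⟩
      have := hsub ha
      simp only [Finset.mem_Icc] at this ⊢
      rcases Nat.lt_or_ge a (n + 2) with h | h
      · omega
      · exfalso
        apply hnot
        have h2 : a = n + 2 := by omega
        exact h2 ▸ ha
    · rintro ⟨⟨hsub, hcard⟩, hadj⟩
      refine ⟨⟨⟨fun a ha => ?_, hcard⟩, hadj⟩, fun hmem => ?_⟩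
      · have := hsub ha; simp only [Finset.mem_Icc] at this ⊢; omega
      · have := hsub hmem; simp only [Finset.mem_Icc] at this; omega
  · rw [Finset.mul_sum]
    apply Finset.sum_nbij' (i := fun s => s.erase (n + 2)) (j := fun t => insert (n + 2) t)
    · intro s hs
      simp only [Finset.mem_filter, Finset.mem_powersetCard, not_not] at hs ⊢
      obtain ⟨⟨⟨hsub, hcard⟩, hadj⟩, hmem⟩ := hs
      have hn1 : n + 1 ∉ s := fun h => hadj (n + 1) h hmem
      refine ⟨⟨fun a ha => ?_, ?_⟩, fun i hi => ?_⟩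
      · have ha' := Finset.mem_of_mem_erase ha
        have hane := Finset.ne_of_mem_erase ha
        have := hsub ha'
        simp only [Finset.mem_Icc] at this ⊢
        have : a ≠ n + 1 := fun e => hn1 (e ▸ ha')
        omega
      · rw [Finset.card_erase_of_mem hmem, hcard]; rfl
      · exact fun h => hadj i (Finset.mem_of_mem_erase hi) (Finset.mem_of_mem_erase h)
    · intro t ht
      simp only [Finset.mem_filter, Finset.mem_powersetCard, not_not] at ht ⊢
      obtain ⟨⟨hsub, hcard⟩, hadj⟩ := ht
      have hnot : (n + 2) ∉ t := fun h => by
        have := hsub h; simp only [Finset.mem_Icc] at this; omega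
      refine ⟨⟨⟨fun a ha => ?_, ?_⟩, fun i hi hcon => ?_⟩, Finset.mem_insert_self _ _⟩
      · rcases Finset.mem_insert.mp ha with h | h
        · simp [h]
        · have := hsub h; simp only [Finset.mem_Icc] at this ⊢; omega
      · rw [Finset.card_insert_of_notMem hnot, hcard]
      · rcases Finset.mem_insert.mp hi with h | h
        · rcases Finset.mem_insert.mp hcon with h' | h'
          · omega
          · have := hsub h'; simp only [Finset.mem_Icc] at this; omega
        · rcases Finset.mem_insert.mp hcon with h' | h'
          · have := hsub h; simp only [Finset.mem_Icc] at this; omega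
          · exact hadj i h h'
    · intro s hs
      simp only [Finset.mem_filter, not_not] at hs
      exact Finset.insert_erase hs.2
    · intro t ht
      simp only [Finset.mem_filter, Finset.mem_powersetCard] at ht
      have hnot : (n + 2) ∉ t := fun h => by
        have := ht.1.1 h; simp only [Finset.mem_Icc] at this; omega
      exact Finset.erase_insert hnot
    · intro s hs
      simp only [Finset.mem_filter, not_not] at hs
      exact (Finset.mul_prod_erase s x hs.2).symm

def Gp (x : R) (c : ℕ → R) (N : ℕ) : R :=
  ∑ i ∈ Finset.range (N + 1), (-1 : R) ^ i * x ^ (N - 2 * i) * etilde (N - 1) i c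

lemma Gp_zero (x : R) (c : ℕ → R) : Gp x c 0 = 1 := by
  simp [Gp, etilde_zero]

lemma Gp_one (x : R) (c : ℕ → R) : Gp x c 1 = x := by
  simp [Gp, Finset.sum_range_succ, etilde_zero, etilde_eq_zero (by norm_num : 0 + 1 < 2 * 1)]

lemma etilde_one_one (c : ℕ → R) : etilde 1 1 c = c 1 := by
  have h : ((Finset.Icc 1 1).powersetCard 1).filter (fun s => ∀ i ∈ s, i + 1 ∉ s)
      = {{1}} := by decide
  rw [etilde, h, Finset.sum_singleton, Finset.prod_singleton]

lemma Gp_two (x : R) (c : ℕ → R) : Gp x c 2 = x * x - c 1 := by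
  rw [Gp]
  rw [Finset.sum_range_succ, Finset.sum_range_succ, Finset.sum_range_succ,
    Finset.range_zero, Finset.sum_empty]
  rw [show (2 : ℕ) - 1 = 1 from rfl, etilde_zero, etilde_one_one,
    etilde_eq_zero (by norm_num : 1 + 1 < 2 * 2)]
  norm_num
  ring

lemma Gp_rec (x : R) (c : ℕ → R) (N : ℕ) :
    Gp x c (N + 2) = x * Gp x c (N + 1) - c (N + 1) * Gp x c N := by
  match N with
  | 0 => rw [Gp_two, Gp_one, Gp_zero]; ring
  | (M + 1) =>
    have hG1 : x * Gp x c (M + 2)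
        = x ^ (M + 3) + ∑ i ∈ Finset.range (M + 3),
            (-1 : R) ^ (i + 1) * x ^ (M + 1 - 2 * i) * etilde (M + 1) (i + 1) c := by
      rw [Finset.sum_range_succ, etilde_eq_zero (by omega : M + 1 + 1 < 2 * (M + 2 + 1)) c,
        mul_zero, add_zero]
      rw [Gp, Finset.mul_sum, Finset.sum_range_succ']
      have e0 : x * ((-1 : R) ^ 0 * x ^ (M + 2 - 2 * 0) * etilde (M + 2 - 1) 0 c)
          = x ^ (M + 3) := by
        simp [etilde_zero]; ring
      rw [e0]
      have hterm : ∀ i ∈ Finset.range (M + 2),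
          x * ((-1 : R) ^ (i + 1) * x ^ (M + 2 - 2 * (i + 1)) * etilde (M + 2 - 1) (i + 1) c)
          = (-1 : R) ^ (i + 1) * x ^ (M + 1 - 2 * i) * etilde (M + 1) (i + 1) c := by
        intro i hi
        rcases le_or_gt (2 * i) M with h | h
        · have h1 : M + 2 - 2 * (i + 1) = M - 2 * i := by omega
          have h2 : M + 1 - 2 * i = (M - 2 * i) + 1 := by omega
          rw [show M + 2 - 1 = M + 1 from rfl, h1, h2]
          ring
        · rw [show M + 2 - 1 = M + 1 from rfl,
            etilde_eq_zero (by omega : M + 1 + 1 < 2 * (i + 1)) c]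
          ring
      rw [Finset.sum_congr rfl hterm, add_comm]
    have hG2 : Gp x c (M + 1)
        = ∑ i ∈ Finset.range (M + 3), (-1 : R) ^ i * x ^ (M + 1 - 2 * i) * etilde M i c := by
      rw [Finset.sum_range_succ, etilde_eq_zero (by omega : M + 1 < 2 * (M + 2)) c,
        mul_zero, add_zero, Gp, show M + 1 - 1 = M from rfl]
    rw [hG1, hG2, Finset.mul_sum, add_sub_assoc, ← Finset.sum_sub_distrib, add_comm (x ^ (M + 3))]
    rw [Gp, Finset.sum_range_succ']
    congr 1
    · apply Finset.sum_congr rfl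
      intro i hi
      have h1 : M + 1 + 2 - 2 * (i + 1) = M + 1 - 2 * i := by omega
      rw [show M + 1 + 2 - 1 = M + 2 from rfl, h1, etilde_succ M i c]
      ring
    · simp [etilde_zero]

lemma tridiag_det_zero (x : R) (y b : ℕ → R) : (tridiag 0 x y b).det = 1 :=
  Matrix.det_fin_zero

lemma tridiag_det_one (x : R) (y b : ℕ → R) : (tridiag 1 x y b).det = x := by
  rw [Matrix.det_fin_one]
  rfl

lemma tridiag_det_rec (N : ℕ) (x : R) (y b : ℕ → R) :
    (tridiag (N + 2) x y b).det =
      x * (tridiag (N + 1) x y b).det - y (N + 1) * b (N + 1) * (tridiag N x y b).det := by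
  set A := tridiag (N + 2) x y b with hA
  rw [Matrix.det_succ_row A (Fin.last (N + 1))]
  rw [Finset.sum_eq_add_of_mem (⟨N, by omega⟩ : Fin (N + 2)) (Fin.last (N + 1))
    (Finset.mem_univ _) (Finset.mem_univ _) (by simp [Fin.ext_iff, Fin.last])
    ?_]
  · have hAll : A (Fin.last (N + 1)) (Fin.last (N + 1)) = x := by
      simp [hA, tridiag, Fin.last]
    have hAlN : A (Fin.last (N + 1)) (⟨N, by omega⟩ : Fin (N + 2)) = y (N + 1) := by
      simp only [hA, tridiag, Matrix.of_apply, Fin.last]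
      rw [if_neg (by omega), if_neg (by omega)]
      simp
    have hsub1 : A.submatrix (Fin.last (N + 1)).succAbove (Fin.last (N + 1)).succAbove
        = tridiag (N + 1) x y b := by
      ext i j
      simp [hA, tridiag, Matrix.submatrix, Fin.succAbove_last]
    have hval : ∀ j : Fin (N + 1),
        (((⟨N, by omega⟩ : Fin (N + 2)).succAbove j : Fin (N + 2)) : ℕ)
        = if (j : ℕ) < N then (j : ℕ) else (j : ℕ) + 1 := by
      intro j
      rw [Fin.succAbove]
      split_ifs with h1 h2 h3
      · rfl
      · exact absurd (by simpa [Fin.lt_def] using h1) h2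
      · exact absurd (by simpa [Fin.lt_def] using h3) h1
      · rfl
    set M := A.submatrix (Fin.last (N + 1)).succAbove
        (⟨N, by omega⟩ : Fin (N + 2)).succAbove with hM
    have hMdet : M.det = b (N + 1) * (tridiag N x y b).det := by
      rw [Matrix.det_succ_column M (Fin.last N)]
      rw [Finset.sum_eq_single (Fin.last N)]
      · have hMent : M (Fin.last N) (Fin.last N) = b (N + 1) := by
          simp only [hM, Matrix.submatrix_apply, Fin.succAbove_last, hA, tridiag,
            Matrix.of_apply]
          have hc : (((⟨N, by omega⟩ : Fin (N + 2)).succAbove (Fin.last N) : Fin (N + 2)) : ℕ)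
              = N + 1 := by rw [hval]; simp [Fin.last]
          rw [hc]
          simp [Fin.last]
        have hsub2 : M.submatrix (Fin.last N).succAbove (Fin.last N).succAbove
            = tridiag N x y b := by
          ext i j
          simp only [hM, Matrix.submatrix_apply, Fin.succAbove_last, hA, tridiag,
            Matrix.of_apply]
          have hc : (((⟨N, by omega⟩ : Fin (N + 2)).succAbove (Fin.castSucc j) : Fin (N + 2)) : ℕ)
              = (j : ℕ) := by rw [hval]; simp [Fin.is_lt, j.isLt]
          rw [hc]
          simp
        rw [hMent, hsub2]
        simp [Fin.last]
      · intro i _ hi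
        have hz : M i (Fin.last N) = 0 := by
          simp only [hM, Matrix.submatrix_apply, Fin.succAbove_last, hA, tridiag,
            Matrix.of_apply]
          have hc : (((⟨N, by omega⟩ : Fin (N + 2)).succAbove (Fin.last N) : Fin (N + 2)) : ℕ)
              = N + 1 := by rw [hval]; simp [Fin.last]
          rw [hc]
          have hilt : (i : ℕ) < N + 1 := i.isLt
          have hine : (i : ℕ) ≠ N := fun h => hi (Fin.ext (by simp [Fin.last, h]))
          rw [Fin.coe_castSucc]
          rw [if_neg (by omega), if_neg (by omega), if_neg (by omega)]
        rw [hz]; ring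
      · intro h
        exact absurd (Finset.mem_univ _) h
    rw [hAll, hAlN, hsub1, hMdet]
    simp only [Fin.val_last]
    have h1 : ((-1 : R)) ^ (N + 1 + N) = -1 := by
      rw [show N + 1 + N = 2 * N + 1 by omega, pow_succ, pow_mul]
      simp
    have h2 : ((-1 : R)) ^ (N + 1 + (N + 1)) = 1 := by
      rw [show N + 1 + (N + 1) = 2 * (N + 1) by omega, pow_mul]
      simp
    rw [h1, h2]
    ring
  · intro j _ hj
    have hz : A (Fin.last (N + 1)) j = 0 := by
      simp only [hA, tridiag, Matrix.of_apply, Fin.last]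
      have h1 : (j : ℕ) ≠ N + 1 := by
        intro h; exact hj.2 (by simp [Fin.ext_iff, Fin.last, h])
      have h2 : (j : ℕ) ≠ N := by
        intro h; exact hj.1 (by simp [Fin.ext_iff, h])
      have hjlt : (j : ℕ) < N + 2 := j.isLt
      rw [if_neg (by omega), if_neg (by omega), if_neg (by omega)]
    rw [hz]; ring

lemma etilde_smul (n k : ℕ) (a : R) (f : ℕ → R) :
    etilde n k (fun j => a * f j) = a ^ k * etilde n k f := by
  unfold etilde
  rw [Finset.mul_sum]
  apply Finset.sum_congr rfl
  intro s hs
  simp only [Finset.mem_filter, Finset.mem_powersetCard] at hs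
  rw [Finset.prod_mul_distrib, Finset.prod_const, hs.1.2]

lemma tridiag_det_eq_Gp (N : ℕ) (x : R) (y b : ℕ → R) :
    (tridiag N x y b).det = Gp x (fun k => y k * b k) N := by
  induction N using Nat.strong_induction_on with
  | _ N ih =>
    match N with
    | 0 => rw [tridiag_det_zero, Gp_zero]
    | 1 => rw [tridiag_det_one, Gp_one]
    | (M + 2) =>
      rw [tridiag_det_rec, ih (M + 1) (by omega), ih M (by omega), Gp_rec]


end HofstadterAux

/-- The characteristic polynomial of the quantum-group gauge form `Ĥ′` of the
Hofstadter Hamiltonian: `Ĥ′` is bidiagonal with zero diagonal, constant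
subdiagonal `−2sin(πα)` and superdiagonal `−2sin(πα)·sin²(kπα)/sin²(πα)`, and
`det(Ĥ′ − E·I)` is given by the 2-step elementary symmetric polynomial formula. -/
theorem det_hofstadter_quantum_gauge (P Q : ℕ) (hQ : 2 ≤ Q)
    (hco : Nat.Coprime P Q) (E : ℝ) :
    (tridiag Q 0 (fun _ => -2 * Real.sin (Real.pi * ((P : ℝ) / (Q : ℝ))))
        (fun k => -2 * Real.sin (Real.pi * ((P : ℝ) / (Q : ℝ))) *
          (Real.sin ((k : ℝ) * Real.pi * ((P : ℝ) / (Q : ℝ))) ^ 2 /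
            Real.sin (Real.pi * ((P : ℝ) / (Q : ℝ))) ^ 2)) -
      E • (1 : Matrix (Fin Q) (Fin Q) ℝ)).det =
    ∑ i ∈ Finset.range (Q / 2 + 1),
      (-1 : ℝ) ^ (Q + i) * 4 ^ i * E ^ (Q - 2 * i) *
        etilde (Q - 1) i (fun k => Real.sin ((k : ℝ) * Real.pi * ((P : ℝ) / (Q : ℝ))) ^ 2) := by

  set α : ℝ := (P : ℝ) / (Q : ℝ) with hα
  set s : ℝ := Real.sin (Real.pi * α) with hs
  set f : ℕ → ℝ := fun k => Real.sin ((k : ℝ) * Real.pi * α) ^ 2 with hf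
  have hQ0 : 0 < Q := by omega
  have hsne : s ≠ 0 := by
    intro h
    rw [hs, Real.sin_eq_zero_iff] at h
    obtain ⟨n, hn⟩ := h
    have hQR : (Q : ℝ) ≠ 0 := Nat.cast_ne_zero.mpr (by omega)
    have hpi : Real.pi ≠ 0 := Real.pi_ne_zero
    have hnα : (n : ℝ) = α := by
      apply mul_left_cancel₀ hpi
      rw [← hn]; ring
    have hPnQ : (P : ℝ) = (n : ℝ) * Q := by
      rw [hα] at hnα
      field_simp at hnα
      linarith
    have hPZ : (P : ℤ) = n * Q := by exact_mod_cast hPnQ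
    have hdvd : (Q : ℤ) ∣ (P : ℤ) := ⟨n, by linarith⟩
    have hdn : Q ∣ P := Int.natCast_dvd_natCast.mp hdvd
    have h1 : Q ∣ 1 := by
      have := Nat.dvd_gcd hdn dvd_rfl
      rwa [hco.gcd_eq_one] at this
    have := Nat.le_of_dvd one_pos h1
    omega
  -- matrix rewrite
  have hmat : (tridiag Q 0 (fun _ => -2 * s) (fun k => -2 * s * (f k / s ^ 2)) -
      E • (1 : Matrix (Fin Q) (Fin Q) ℝ))
      = tridiag Q (-E) (fun _ => -2 * s) (fun k => -2 * s * (f k / s ^ 2)) := by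
    ext i j
    simp only [Matrix.sub_apply, Matrix.smul_apply, Matrix.one_apply, tridiag, Matrix.of_apply,
      smul_eq_mul]
    by_cases h : (i : ℕ) = (j : ℕ)
    · rw [if_pos h, if_pos (Fin.ext h), if_pos h]
      ring
    · rw [if_neg h, if_neg (fun e => h (congrArg Fin.val e)), if_neg h]
      ring_nf
  rw [hmat, tridiag_det_eq_Gp]
  have hc : (fun k => (-2 * s) * (-2 * s * (f k / s ^ 2))) = fun k => 4 * f k := by
    funext k
    field_simp
    ring
  rw [hc, Gp]
  have hext : ∀ i, etilde (Q - 1) i (fun k => 4 * f k) = 4 ^ i * etilde (Q - 1) i f :=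
    fun i => etilde_smul (Q - 1) i 4 f
  -- extend RHS sum to range (Q+1)
  rw [show (∑ i ∈ Finset.range (Q / 2 + 1),
      (-1 : ℝ) ^ (Q + i) * 4 ^ i * E ^ (Q - 2 * i) * etilde (Q - 1) i f)
    = ∑ i ∈ Finset.range (Q + 1),
      (-1 : ℝ) ^ (Q + i) * 4 ^ i * E ^ (Q - 2 * i) * etilde (Q - 1) i f from ?_]
  · apply Finset.sum_congr rfl
    intro i hi
    rw [hext]
    rcases le_or_gt (2 * i) Q with h | h
    · have hE : (-E : ℝ) ^ (Q - 2 * i) = (-1) ^ (Q - 2 * i) * E ^ (Q - 2 * i) := by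
        rw [neg_pow]
      have hsign : ((-1 : ℝ)) ^ (Q + i) = (-1) ^ i * (-1) ^ (Q - 2 * i) := by
        rw [← pow_add, show i + (Q - 2 * i) = Q - i by omega]
        rw [show Q + i = (Q - i) + 2 * i by omega, pow_add, pow_mul]
        simp
      rw [hE, hsign]
      ring
    · rw [etilde_eq_zero (by omega : (Q - 1) + 1 < 2 * i) f]
      ring
  · apply Finset.sum_subset
    · intro i hi
      simp only [Finset.mem_range] at hi ⊢
      omega
    · intro i _ hi
      simp only [Finset.mem_range, not_lt] at hi
      rw [etilde_eq_zero (by omega : (Q - 1) + 1 < 2 * i) f]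
      ring
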